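/- Let m ≥ 1 and let q = (q_1, ..., q_m) be a probability distribution sorted in non-increasing order, together with indices 0 ≤ k* ≤ j* ≤ m, k* < m, such that: q_j > 2/m for j = 1,...,k*; q_j ∈ (3/(2m), 2/m] for j = k*+1,...,j*; and q_j ≤ 3/(2m) for j = j*+1,...,m. Let A_1 = Σ_{s=k*+1}^{j*} q_s, A_2 = Σ_{s=j*+1}^{m} q_s, A = A_1 + A_2, and assume A_2 ≥ A/2. Let q̃ = (q_1, ..., q_{k*}, A/(m−k*), ..., A/(m−k*)) be the probability distribution whose last m−k* components all equal A/(m−k*). Then H(q) ≥ H(q̃) − √3/(e·ln 2), where H denotes Shannon entropy in bits. -/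

import Mathlib

/-- Shannon entropy in bits of a finite vector. -/
noncomputable def shannonH {m : ℕ} (w : Fin m → ℝ) : ℝ :=
  -∑ j, w j * Real.logb 2 (w j)

/-!
The two distributions agree outside the tail `T = {j ≥ k*}`, which carries mass `A`. On `T`,
the bounds `q ≤ 2/m` on the middle block and `q ≤ 3/(2m)` on the small block, with at least
half of the mass in the small block, give `∑_T q log q ≤ A log √(2/m · 3/(2m)) = A log (√3/m)`.
The flattened tail has entropy `-A log u` with `u = A/(m-k*)`, so the loss is at most
`(m-k*) · u log ((√3/m)/u) ≤ (m-k*) · √3/(m e) ≤ √3/e`, because `x log (c/x) ≤ c/e`.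
-/

open Real Finset

theorem Fin.card_filter_le_val (m k : ℕ) : #{j : Fin m | k ≤ j.val} = m - k := by
  have h := card_filter_add_card_filter_not (s := (univ : Finset (Fin m)))
    (fun j : Fin m => j.val < k)
  simp only [not_lt, card_univ, Fintype.card_fin, Fin.card_filter_val_lt] at h
  omega

theorem Fin.sum_filter_le_val_eq_add {M : Type*} [AddCommMonoid M] {m k l : ℕ} (hkl : k ≤ l)
    (f : Fin m → M) :
    ∑ j ∈ {j : Fin m | k ≤ j.val}, f j
      = ∑ j ∈ {j : Fin m | k ≤ j.val ∧ j.val < l}, f j + ∑ j ∈ {j : Fin m | l ≤ j.val}, f j := by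
  rw [← sum_filter_add_sum_filter_not _ (fun j => j.val < l), filter_filter]
  congr 2
  ext j
  simp only [mem_filter, mem_univ, true_and, not_lt]
  omega

namespace Real

lemma mul_log_le_mul_log_of_le {x c : ℝ} (hx : 0 ≤ x) (hxc : x ≤ c) :
    x * log x ≤ x * log c := by
  obtain rfl | hx := hx.eq_or_lt
  · simp
  exact mul_le_mul_of_nonneg_left (log_le_log hx hxc) hx.le

lemma mul_log_sub_log_le_div_exp_one {x : ℝ} (hx : 0 ≤ x) {c : ℝ} (hc : 0 < c) :
    x * (log c - log x) ≤ c / exp 1 := by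
  obtain rfl | hx := hx.eq_or_lt
  · simp only [zero_mul]; positivity
  have hlog : exp 1 * log (c / x) ≤ c / x := by
    simpa [exp_log (div_pos hc hx)] using exp_one_mul_le_exp (x := log (c / x))
  rw [← log_div hc.ne' hx.ne', le_div_iff₀ (exp_pos 1)]
  calc x * log (c / x) * exp 1 = x * (exp 1 * log (c / x)) := by ring
    _ ≤ x * (c / x) := by gcongr
    _ = c := by field_simp

end Real

section Flattening

variable {ι : Type*} (q : ι → ℝ)

lemma sum_mul_log_le_of_two_levels (M S : Finset ι) (hq : ∀ j, 0 ≤ q j) {a b : ℝ}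
    (ha : 0 < a) (hab : a ≤ b) (hM : ∀ j ∈ M, q j ≤ b) (hS : ∀ j ∈ S, q j ≤ a)
    (hMS : ∑ j ∈ M, q j ≤ ∑ j ∈ S, q j) :
    ∑ j ∈ M, q j * log (q j) + ∑ j ∈ S, q j * log (q j)
      ≤ (∑ j ∈ M, q j + ∑ j ∈ S, q j) * log √(a * b) := by
  have hlevel : ∀ (T : Finset ι) (c : ℝ), (∀ j ∈ T, q j ≤ c) →
      ∑ j ∈ T, q j * log (q j) ≤ (∑ j ∈ T, q j) * log c := fun T c h => by
    rw [sum_mul]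
    exact sum_le_sum fun j hj => mul_log_le_mul_log_of_le (hq j) (h j hj)
  have hsqrt : log √(a * b) = (log a + log b) / 2 := by
    rw [log_sqrt (mul_nonneg ha.le (ha.le.trans hab)), log_mul ha.ne' (ha.trans_le hab).ne']
  -- moving mass from the level `b` down to the level `a` only lowers the bound
  have hexchange := mul_nonneg (sub_nonneg.2 hMS) (sub_nonneg.2 (log_le_log ha hab))
  rw [hsqrt]
  nlinarith [hlevel M b hM, hlevel S a hS]

lemma card_mul_negMulLog_average_le (T : Finset ι) (hq : ∀ j, 0 ≤ q j) {c : ℝ} (hc : 0 < c)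
    (hT : ∑ j ∈ T, q j * log (q j) ≤ (∑ j ∈ T, q j) * log c) :
    #T * negMulLog ((∑ j ∈ T, q j) / #T) ≤ ∑ j ∈ T, negMulLog (q j) + c * #T / exp 1 := by
  obtain rfl | hne := T.eq_empty_or_nonempty
  · simp
  set u := (∑ j ∈ T, q j) / #T
  have hu : 0 ≤ u := div_nonneg (sum_nonneg fun j _ => hq j) (by positivity)
  have hnu : #T * u = ∑ j ∈ T, q j := mul_div_cancel₀ _ (by positivity)
  have hsum : ∑ j ∈ T, negMulLog (q j) = -∑ j ∈ T, q j * log (q j) := by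
    simp [negMulLog_eq_neg]
  calc #T * negMulLog u = -((∑ j ∈ T, q j) * log c) + #T * (u * (log c - log u)) := by
        rw [← hnu, negMulLog]; ring
    _ ≤ ∑ j ∈ T, negMulLog (q j) + #T * (c / exp 1) := by
        gcongr ?_ + ?_
        · linarith
        · exact mul_le_mul_of_nonneg_left (mul_log_sub_log_le_div_exp_one hu hc) (by positivity)
    _ = _ := by ring

end Flattening

lemma shannonH_eq_sum_negMulLog {m : ℕ} (w : Fin m → ℝ) :
    shannonH w = (∑ j, negMulLog (w j)) / log 2 := by
  simp only [shannonH, negMulLog_eq_neg, logb, sum_neg_distrib, neg_div, sum_div, mul_div_assoc]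

lemma shannonH_sub_shannonH_of_eqOn_compl {m : ℕ} {p r : Fin m → ℝ} (T : Finset (Fin m))
    (hpr : ∀ j ∉ T, p j = r j) :
    shannonH p - shannonH r
      = (∑ j ∈ T, negMulLog (p j) - ∑ j ∈ T, negMulLog (r j)) / log 2 := by
  have hcompl : ∑ j ∈ Tᶜ, negMulLog (p j) = ∑ j ∈ Tᶜ, negMulLog (r j) :=
    sum_congr rfl fun j hj => by rw [hpr j (mem_compl.mp hj)]
  simp only [shannonH_eq_sum_negMulLog, ← sum_add_sum_compl T, hcompl]
  ring

theorem greedy2_entropy_q_vs_qtilde_general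
    (m : ℕ) (q : Fin m → ℝ)
    (hqnn : ∀ j, 0 ≤ q j)
    (kstar jstar : ℕ) (hkj : kstar ≤ jstar) (hk : kstar < m)
    (hmid : ∀ j : Fin m, kstar ≤ j.val → j.val < jstar →
      3 / (2 * (m : ℝ)) < q j ∧ q j ≤ 2 / (m : ℝ))
    (hsmall : ∀ j : Fin m, jstar ≤ j.val → q j ≤ 3 / (2 * (m : ℝ)))
    (A1 A2 A : ℝ)
    (hA1 : A1 = ∑ j ∈ Finset.univ.filter
      (fun j : Fin m => kstar ≤ j.val ∧ j.val < jstar), q j)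
    (hA2 : A2 = ∑ j ∈ Finset.univ.filter (fun j : Fin m => jstar ≤ j.val), q j)
    (hAsum : A = A1 + A2) (hA2half : A2 ≥ A / 2)
    (qt : Fin m → ℝ)
    (hqt : ∀ j : Fin m,
      qt j = if j.val < kstar then q j else A / ((m : ℝ) - (kstar : ℝ))) :
    shannonH q ≥ shannonH qt - Real.sqrt 3 / (Real.exp 1 * Real.log 2) := by
  have hm : (0 : ℝ) < m := by exact_mod_cast hk.trans_le' (Nat.zero_le _)
  set T : Finset (Fin m) := {j | kstar ≤ j.val}
  have hcard : (#T : ℝ) = m - kstar := by rw [Fin.card_filter_le_val, Nat.cast_sub hk.le]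
  have hsplit := Fin.sum_filter_le_val_eq_add (M := ℝ) (m := m) hkj
  have hA : A = ∑ j ∈ T, q j := by rw [hAsum, hA1, hA2, hsplit]
  have hlevels : ∑ j ∈ T, q j * log (q j) ≤ A * log (√3 / m) := by
    have hsqrt : √(3 / (2 * m) * (2 / m)) = √3 / m := by
      rw [show 3 / (2 * m) * (2 / m) = 3 / (m : ℝ) ^ 2 by field_simp,
        sqrt_div' _ (sq_nonneg _), sqrt_sq hm.le]
    have h := sum_mul_log_le_of_two_levels q {j : Fin m | kstar ≤ j.val ∧ j.val < jstar}
      {j : Fin m | jstar ≤ j.val} hqnn (a := 3 / (2 * m)) (b := 2 / m) (by positivity)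
      (by rw [div_le_div_iff₀ (by positivity) hm]; linarith)
      (fun j hj => (hmid j (mem_filter.1 hj).2.1 (mem_filter.1 hj).2.2).2)
      (fun j hj => hsmall j (mem_filter.1 hj).2) (by linarith)
    rwa [← hA1, ← hA2, ← hAsum, hsqrt, ← hsplit] at h
  have hflat := card_mul_negMulLog_average_le q T hqnn (by positivity) (hA ▸ hlevels)
  have hqt_T : ∑ j ∈ T, negMulLog (qt j) = #T * negMulLog ((∑ j ∈ T, q j) / #T) := by
    rw [sum_congr rfl fun j hj => by
      rw [hqt j, if_neg (by simp only [T, mem_filter] at hj; omega), ← hcard, hA],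
      sum_const, nsmul_eq_mul]
  have hloss : √3 / m * #T / exp 1 ≤ √3 / exp 1 := by
    gcongr
    rw [div_mul_eq_mul_div, div_le_iff₀ hm, hcard]
    nlinarith [sqrt_nonneg 3, (Nat.cast_nonneg kstar : (0 : ℝ) ≤ kstar)]
  have hpr : ∀ j ∉ T, qt j = q j := fun j hj => by
    simp only [T, mem_filter, mem_univ, true_and, not_le] at hj
    rw [hqt j, if_pos hj]
  rw [ge_iff_le, sub_le_comm, shannonH_sub_shannonH_of_eqOn_compl T hpr, hqt_T, ← div_div]
  gcongr
  linarith

/-- Refined version of the flattening lemma: with components in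
`(3/(2m), 2/m]` between `k*` and `j*`, components `≤ 3/(2m)` beyond `j*`, and
`A₂ ≥ A/2`, the entropy loss with respect to `q̃` is at most `√3/(e ln 2)`. -/
theorem greedy2_entropy_q_vs_qtilde
    (m : ℕ) (hm : 1 ≤ m) (q : Fin m → ℝ)
    (hqnn : ∀ j, 0 ≤ q j) (hqsum : ∑ j, q j = 1) (hqsort : Antitone q)
    (kstar jstar : ℕ) (hkj : kstar ≤ jstar) (hjm : jstar ≤ m) (hk : kstar < m)
    (hbig : ∀ j : Fin m, j.val < kstar → 2 / (m : ℝ) < q j)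
    (hmid : ∀ j : Fin m, kstar ≤ j.val → j.val < jstar →
      3 / (2 * (m : ℝ)) < q j ∧ q j ≤ 2 / (m : ℝ))
    (hsmall : ∀ j : Fin m, jstar ≤ j.val → q j ≤ 3 / (2 * (m : ℝ)))
    (A1 A2 A : ℝ)
    (hA1 : A1 = ∑ j ∈ Finset.univ.filter
      (fun j : Fin m => kstar ≤ j.val ∧ j.val < jstar), q j)
    (hA2 : A2 = ∑ j ∈ Finset.univ.filter (fun j : Fin m => jstar ≤ j.val), q j)
    (hAsum : A = A1 + A2) (hA2half : A2 ≥ A / 2)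
    (qt : Fin m → ℝ)
    (hqt : ∀ j : Fin m,
      qt j = if j.val < kstar then q j else A / ((m : ℝ) - (kstar : ℝ))) :
    shannonH q ≥ shannonH qt - Real.sqrt 3 / (Real.exp 1 * Real.log 2) :=
  greedy2_entropy_q_vs_qtilde_general m q hqnn kstar jstar hkj hk hmid hsmall A1 A2 A hA1 hA2 hAsum
    hA2half qt hqt
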